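/- arXiv:1909.06099 — 3 statements merged into one kernel-verified Lean document; each statement's English description precedes it below -/
import Mathlib

section
/- Suppose (U*, y*, S*) satisfies A(U*(U*)^T) = b, S* = C - A^T y* ⪰ 0, and U*(U*)^T S* = 0, where A is the linear map X ↦ (A_i • X)_{i=1}^m. Then for every μ > 0, (1/2)‖A(U*(U*)^T + μI_n) - b‖² + (1/2)‖(U*(U*)^T + μI_n)(C - A^T y*) - μI_n‖_F² = ω* μ², where ω* = (1/2)‖A(I_n)‖² + (1/2)‖S* - I_n‖_F². -/
open Matrix

/-- the residual of the least-squares problem at a rank-`r` optimal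
solution `(U*, y*)` equals `ω* μ²`, where
`ω* = (1/2)‖𝒜(I)‖² + (1/2)‖S* - I‖_F²`.  Squared Euclidean/Frobenius norms are
written via sums of squares and traces. -/
theorem residual_at_lowrank_solution {n r m : ℕ}
    (A : Fin m → Matrix (Fin n) (Fin n) ℝ)
    (C : Matrix (Fin n) (Fin n) ℝ) (b : Fin m → ℝ)
    (Ustar : Matrix (Fin n) (Fin r) ℝ) (ystar : Fin m → ℝ)
    (Sstar : Matrix (Fin n) (Fin n) ℝ)
    (hSdef : Sstar = C - ∑ i, ystar i • A i)
    (hfeas : ∀ i, ((A i)ᵀ * (Ustar * Ustarᵀ)).trace = b i)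
    (hpsd : Sstar.PosSemidef)
    (hcomp : Ustar * Ustarᵀ * Sstar = 0)
    (μ : ℝ) (hμ : 0 < μ) :
    (1/2 : ℝ) * (∑ i, (((A i)ᵀ * (Ustar * Ustarᵀ + μ • (1 : Matrix (Fin n) (Fin n) ℝ))).trace - b i) ^ 2)
      + (1/2 : ℝ) * (((Ustar * Ustarᵀ + μ • (1 : Matrix (Fin n) (Fin n) ℝ)) * Sstar - μ • (1 : Matrix (Fin n) (Fin n) ℝ))ᵀ *
          ((Ustar * Ustarᵀ + μ • (1 : Matrix (Fin n) (Fin n) ℝ)) * Sstar - μ • (1 : Matrix (Fin n) (Fin n) ℝ))).trace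
    = ((1/2 : ℝ) * (∑ i, ((A i).trace) ^ 2)
        + (1/2 : ℝ) * ((Sstar - 1)ᵀ * (Sstar - 1)).trace) * μ ^ 2 := by
  have h1 : ∀ i, ((A i)ᵀ * (Ustar * Ustarᵀ + μ • (1 : Matrix (Fin n) (Fin n) ℝ))).trace - b i
      = μ * (A i).trace := by
    intro i
    rw [Matrix.mul_add, Matrix.trace_add, hfeas i, Matrix.mul_smul, Matrix.mul_one,
      Matrix.trace_smul, Matrix.trace_transpose, smul_eq_mul]
    ring
  have h2 : (Ustar * Ustarᵀ + μ • (1 : Matrix (Fin n) (Fin n) ℝ)) * Sstar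
      - μ • (1 : Matrix (Fin n) (Fin n) ℝ) = μ • (Sstar - 1) := by
    rw [Matrix.add_mul, hcomp, Matrix.smul_mul, Matrix.one_mul, smul_sub]
    abel
  simp only [h1, h2, Matrix.transpose_smul, Matrix.smul_mul, Matrix.mul_smul,
    Matrix.trace_smul, smul_eq_mul, mul_pow]
  rw [← Finset.mul_sum]
  ring
end

section
/- Let A ∈ ℝ^{m×n²}, S ∈ S ℝ^{n×n}, U ∈ ℝ^{n×r}, and Q = (U ⊗ I_n) + (I_n ⊗ U)Π_{nr}. Then the largest eigenvalue of M = Q^T (A^T A + S² ⊗ I_n) Q satisfies λ_max(M) ≤ (σ_max(A)² + λ_max(S)²) σ_max(Q)² ≤ 4 (σ_max(A)² + λ_max(S)²) σ_max(U)². -/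
open Matrix Kronecker

/-- The commutation (vec-permutation) matrix `Π_{nr}` with `vec(Bᵀ) = Π_{nr} vec(B)`
for all `B ∈ ℝ^{n×r}`. -/
def commMat (n r : ℕ) : Matrix (Fin n × Fin r) (Fin r × Fin n) ℝ :=
  Matrix.of fun p q => if p.1 = q.2 ∧ p.2 = q.1 then 1 else 0

/-- The largest singular value of a real matrix. -/
noncomputable def sigMax {α β : Type*} [Fintype α] [Fintype β] [DecidableEq β]
    (M : Matrix α β ℝ) : ℝ :=
  Real.sqrt (⨆ i, (Matrix.isHermitian_conjTranspose_mul_self M).eigenvalues i)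

section Helpers

set_option linter.unusedSectionVars false

variable {ι : Type*} [Fintype ι] [DecidableEq ι]

private lemma dot_eq_sum_onb (b : OrthonormalBasis ι ℝ (EuclideanSpace ℝ ι)) (x y : ι → ℝ) :
    x ⬝ᵥ y = ∑ i, (x ⬝ᵥ ⇑(b i)) * (⇑(b i) ⬝ᵥ y) := by
  have h := b.sum_inner_mul_inner ((EuclideanSpace.equiv ι ℝ).symm x)
    ((EuclideanSpace.equiv ι ℝ).symm y)
  simp only [PiLp.inner_apply, RCLike.inner_apply, conj_trivial] at h
  simpa [dotProduct, mul_comm] using h.symm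

private lemma onb_dot_mulVec {B : Matrix ι ι ℝ} (hB : B.IsHermitian) (x : ι → ℝ) (i : ι) :
    ⇑(hB.eigenvectorBasis i) ⬝ᵥ (B *ᵥ x) = hB.eigenvalues i * (⇑(hB.eigenvectorBasis i) ⬝ᵥ x) := by
  rw [dotProduct_mulVec, ← mulVec_transpose, ← conjTranspose_eq_transpose_of_trivial, hB.eq,
    hB.mulVec_eigenvectorBasis, smul_dotProduct, smul_eq_mul]

private lemma eig_le_sup {B : Matrix ι ι ℝ} (hB : B.IsHermitian) (i : ι) :
    hB.eigenvalues i ≤ ⨆ j, hB.eigenvalues j :=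
  le_ciSup (Set.Finite.bddAbove (Set.finite_range _)) i

private lemma quad_le {B : Matrix ι ι ℝ} (hB : B.IsHermitian) (x : ι → ℝ) :
    x ⬝ᵥ B *ᵥ x ≤ (⨆ i, hB.eigenvalues i) * (x ⬝ᵥ x) := by
  cases isEmpty_or_nonempty ι with
  | inl h => simp [dotProduct]
  | inr h =>
    set b := hB.eigenvectorBasis
    calc x ⬝ᵥ B *ᵥ x = ∑ i, (x ⬝ᵥ ⇑(b i)) * (⇑(b i) ⬝ᵥ (B *ᵥ x)) := dot_eq_sum_onb b _ _
      _ = ∑ i, hB.eigenvalues i * (x ⬝ᵥ ⇑(b i))^2 := by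
          refine Finset.sum_congr rfl fun i _ => ?_
          rw [onb_dot_mulVec hB x i, dotProduct_comm]; ring
      _ ≤ ∑ i, (⨆ j, hB.eigenvalues j) * (x ⬝ᵥ ⇑(b i))^2 := by
          refine Finset.sum_le_sum fun i _ => ?_
          exact mul_le_mul_of_nonneg_right (eig_le_sup hB i) (sq_nonneg _)
      _ = (⨆ j, hB.eigenvalues j) * (x ⬝ᵥ x) := by
          rw [← Finset.mul_sum]
          congr 1
          rw [dot_eq_sum_onb b x x]
          refine Finset.sum_congr rfl fun i _ => ?_
          rw [dotProduct_comm x]; ring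

private lemma normsq_mulVec_le_psd {B : Matrix ι ι ℝ} (hB : B.PosSemidef) (x : ι → ℝ) :
    (B *ᵥ x) ⬝ᵥ (B *ᵥ x) ≤ (⨆ i, hB.isHermitian.eigenvalues i)^2 * (x ⬝ᵥ x) := by
  cases isEmpty_or_nonempty ι with
  | inl h => simp [dotProduct]
  | inr h =>
    set b := hB.isHermitian.eigenvectorBasis
    calc (B *ᵥ x) ⬝ᵥ (B *ᵥ x)
        = ∑ i, ((B *ᵥ x) ⬝ᵥ ⇑(b i)) * (⇑(b i) ⬝ᵥ (B *ᵥ x)) := dot_eq_sum_onb b _ _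
      _ = ∑ i, (hB.isHermitian.eigenvalues i)^2 * (⇑(b i) ⬝ᵥ x)^2 := by
          refine Finset.sum_congr rfl fun i _ => ?_
          rw [dotProduct_comm _ (⇑(b i)), onb_dot_mulVec hB.isHermitian x i]; ring
      _ ≤ ∑ i, (⨆ j, hB.isHermitian.eigenvalues j)^2 * (⇑(b i) ⬝ᵥ x)^2 := by
          refine Finset.sum_le_sum fun i _ => ?_
          refine mul_le_mul_of_nonneg_right ?_ (sq_nonneg _)
          exact pow_le_pow_left₀ (hB.eigenvalues_nonneg i) (eig_le_sup hB.isHermitian i) 2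
      _ = (⨆ j, hB.isHermitian.eigenvalues j)^2 * (x ⬝ᵥ x) := by
          rw [← Finset.mul_sum]
          congr 1
          rw [dot_eq_sum_onb b x x]
          refine Finset.sum_congr rfl fun i _ => ?_
          rw [dotProduct_comm x]; ring

private lemma dot_self_eq_normsq (x : ι → ℝ) :
    x ⬝ᵥ x = ‖(EuclideanSpace.equiv ι ℝ).symm x‖^2 := by
  have : x ⬝ᵥ x = @inner ℝ (EuclideanSpace ℝ ι) _ ((EuclideanSpace.equiv ι ℝ).symm x)
      ((EuclideanSpace.equiv ι ℝ).symm x) := by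
    rw [PiLp.inner_apply]; simp [dotProduct, mul_comm, sq]
  rw [this, real_inner_self_eq_norm_sq]

private lemma dot_self_nonneg (x : ι → ℝ) : 0 ≤ x ⬝ᵥ x := by
  rw [dot_self_eq_normsq]; positivity

private lemma onb_dot_self {B : Matrix ι ι ℝ} (hB : B.IsHermitian) (i : ι) :
    ⇑(hB.eigenvectorBasis i) ⬝ᵥ ⇑(hB.eigenvectorBasis i) = 1 := by
  rw [dot_self_eq_normsq]
  have h : ((EuclideanSpace.equiv ι ℝ).symm ⇑(hB.eigenvectorBasis i)) = hB.eigenvectorBasis i :=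
    rfl
  rw [h, hB.eigenvectorBasis.orthonormal.1 i]; norm_num

private lemma nsq_add_le (a b : ι → ℝ) :
    (a + b) ⬝ᵥ (a + b) ≤ (Real.sqrt (a ⬝ᵥ a) + Real.sqrt (b ⬝ᵥ b))^2 := by
  have hn : ∀ u : ι → ℝ, Real.sqrt (u ⬝ᵥ u) = ‖(EuclideanSpace.equiv ι ℝ).symm u‖ := by
    intro u; rw [dot_self_eq_normsq, Real.sqrt_sq (norm_nonneg _)]
  rw [dot_self_eq_normsq, hn, hn]
  have he : (EuclideanSpace.equiv ι ℝ).symm (a + b)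
      = (EuclideanSpace.equiv ι ℝ).symm a + (EuclideanSpace.equiv ι ℝ).symm b := rfl
  rw [he]
  exact pow_le_pow_left₀ (norm_nonneg _) (norm_add_le _ _) 2

end Helpers

section SigMaxLemmas

set_option linter.unusedSectionVars false

variable {α β γ : Type*} [Fintype α] [Fintype β] [Fintype γ] [DecidableEq β] [DecidableEq γ]

private lemma lamMax_nonneg (X : Matrix α β ℝ) :
    0 ≤ ⨆ i, (Matrix.isHermitian_conjTranspose_mul_self X).eigenvalues i := by
  cases isEmpty_or_nonempty β with
  | inl h => rw [Real.iSup_of_isEmpty]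
  | inr h =>
    obtain ⟨i⟩ := h
    exact le_trans ((posSemidef_conjTranspose_mul_self X).eigenvalues_nonneg i) (eig_le_sup _ i)

private lemma sigMax_nonneg (X : Matrix α β ℝ) : 0 ≤ sigMax X := Real.sqrt_nonneg _

private lemma sigMax_sq (X : Matrix α β ℝ) :
    sigMax X ^ 2 = ⨆ i, (Matrix.isHermitian_conjTranspose_mul_self X).eigenvalues i :=
  Real.sq_sqrt (lamMax_nonneg X)

private lemma dot_conjTranspose_mul (X : Matrix α β ℝ) (x y : β → ℝ) :
    x ⬝ᵥ ((Xᴴ * X) *ᵥ y) = (X *ᵥ x) ⬝ᵥ (X *ᵥ y) := by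
  rw [conjTranspose_eq_transpose_of_trivial, ← mulVec_mulVec, dotProduct_mulVec,
    vecMul_transpose]

private lemma normsq_mulVec_le (X : Matrix α β ℝ) (x : β → ℝ) :
    (X *ᵥ x) ⬝ᵥ (X *ᵥ x) ≤ sigMax X ^ 2 * (x ⬝ᵥ x) := by
  rw [← dot_conjTranspose_mul, sigMax_sq]
  exact quad_le _ x

private lemma sigMax_le_of {c : ℝ} (hc : 0 ≤ c) (X : Matrix α β ℝ)
    (h : ∀ x : β → ℝ, (X *ᵥ x) ⬝ᵥ (X *ᵥ x) ≤ c^2 * (x ⬝ᵥ x)) : sigMax X ≤ c := by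
  cases isEmpty_or_nonempty β with
  | inl hE => simp [sigMax, Real.iSup_of_isEmpty, hc]
  | inr hN =>
    set hH := Matrix.isHermitian_conjTranspose_mul_self X
    obtain ⟨i₀, hi₀⟩ := exists_eq_ciSup_of_finite (f := hH.eigenvalues)
    have hv : (⇑(hH.eigenvectorBasis i₀) : β → ℝ) ⬝ᵥ ((Xᴴ * X) *ᵥ ⇑(hH.eigenvectorBasis i₀))
        = hH.eigenvalues i₀ := by
      rw [onb_dot_mulVec hH _ i₀, onb_dot_self hH i₀, mul_one]
    have hb : hH.eigenvalues i₀ ≤ c^2 := by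
      rw [← hv, dot_conjTranspose_mul]
      calc (X *ᵥ ⇑(hH.eigenvectorBasis i₀)) ⬝ᵥ (X *ᵥ ⇑(hH.eigenvectorBasis i₀))
          ≤ c^2 * (⇑(hH.eigenvectorBasis i₀) ⬝ᵥ ⇑(hH.eigenvectorBasis i₀)) := h _
        _ = c^2 := by rw [onb_dot_self hH i₀, mul_one]
    rw [sigMax, ← hi₀]
    calc Real.sqrt (hH.eigenvalues i₀) ≤ Real.sqrt (c^2) := Real.sqrt_le_sqrt hb
      _ = c := by rw [Real.sqrt_sq hc]

private lemma kron_one_mulVec (U : Matrix α β ℝ) (x : β × γ → ℝ) (a : α) (c : γ) :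
    ((U ⊗ₖ (1 : Matrix γ γ ℝ)) *ᵥ x) (a, c) = (U *ᵥ fun b => x (b, c)) a := by
  simp [mulVec, dotProduct, Fintype.sum_prod_type, one_apply, mul_ite, ite_mul,
    Finset.sum_ite_eq, Finset.sum_ite_eq']

private lemma one_kron_mulVec (U : Matrix α β ℝ) (x : γ × β → ℝ) (c : γ) (a : α) :
    (((1 : Matrix γ γ ℝ) ⊗ₖ U) *ᵥ x) (c, a) = (U *ᵥ fun b => x (c, b)) a := by
  simp [mulVec, dotProduct, Fintype.sum_prod_type, one_apply, mul_ite, ite_mul,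
    Finset.sum_ite_eq, Finset.sum_ite_eq']

private lemma nsq_kron_one_le (U : Matrix α β ℝ) (x : β × γ → ℝ) :
    ((U ⊗ₖ (1 : Matrix γ γ ℝ)) *ᵥ x) ⬝ᵥ ((U ⊗ₖ (1 : Matrix γ γ ℝ)) *ᵥ x)
      ≤ sigMax U ^ 2 * (x ⬝ᵥ x) := by
  have h1 : ((U ⊗ₖ (1 : Matrix γ γ ℝ)) *ᵥ x) ⬝ᵥ ((U ⊗ₖ (1 : Matrix γ γ ℝ)) *ᵥ x)
      = ∑ c : γ, (U *ᵥ fun b => x (b, c)) ⬝ᵥ (U *ᵥ fun b => x (b, c)) := by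
    simp only [dotProduct, Fintype.sum_prod_type, kron_one_mulVec]
    rw [Finset.sum_comm]
  have h2 : x ⬝ᵥ x = ∑ c : γ, (fun b => x (b, c)) ⬝ᵥ (fun b => x (b, c)) := by
    simp only [dotProduct, Fintype.sum_prod_type]
    rw [Finset.sum_comm]
  rw [h1, h2, Finset.mul_sum]
  exact Finset.sum_le_sum fun c _ => normsq_mulVec_le U _

private lemma nsq_one_kron_le (U : Matrix α β ℝ) (x : γ × β → ℝ) :
    (((1 : Matrix γ γ ℝ) ⊗ₖ U) *ᵥ x) ⬝ᵥ (((1 : Matrix γ γ ℝ) ⊗ₖ U) *ᵥ x)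
      ≤ sigMax U ^ 2 * (x ⬝ᵥ x) := by
  have h1 : (((1 : Matrix γ γ ℝ) ⊗ₖ U) *ᵥ x) ⬝ᵥ (((1 : Matrix γ γ ℝ) ⊗ₖ U) *ᵥ x)
      = ∑ c : γ, (U *ᵥ fun b => x (c, b)) ⬝ᵥ (U *ᵥ fun b => x (c, b)) := by
    simp only [dotProduct, Fintype.sum_prod_type, one_kron_mulVec]
  have h2 : x ⬝ᵥ x = ∑ c : γ, (fun b => x (c, b)) ⬝ᵥ (fun b => x (c, b)) := by
    simp only [dotProduct, Fintype.sum_prod_type]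
  rw [h1, h2, Finset.mul_sum]
  exact Finset.sum_le_sum fun c _ => normsq_mulVec_le U _

private lemma nsq_kron_one_psd_le {n : ℕ} {S : Matrix (Fin n) (Fin n) ℝ} (hS : S.PosSemidef)
    (x : Fin n × γ → ℝ) :
    ((S ⊗ₖ (1 : Matrix γ γ ℝ)) *ᵥ x) ⬝ᵥ ((S ⊗ₖ (1 : Matrix γ γ ℝ)) *ᵥ x)
      ≤ (⨆ i, hS.isHermitian.eigenvalues i) ^ 2 * (x ⬝ᵥ x) := by
  have h1 : ((S ⊗ₖ (1 : Matrix γ γ ℝ)) *ᵥ x) ⬝ᵥ ((S ⊗ₖ (1 : Matrix γ γ ℝ)) *ᵥ x)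
      = ∑ c : γ, (S *ᵥ fun b => x (b, c)) ⬝ᵥ (S *ᵥ fun b => x (b, c)) := by
    simp only [dotProduct, Fintype.sum_prod_type, kron_one_mulVec]
    rw [Finset.sum_comm]
  have h2 : x ⬝ᵥ x = ∑ c : γ, (fun b => x (b, c)) ⬝ᵥ (fun b => x (b, c)) := by
    simp only [dotProduct, Fintype.sum_prod_type]
    rw [Finset.sum_comm]
  rw [h1, h2, Finset.mul_sum]
  exact Finset.sum_le_sum fun c _ => normsq_mulVec_le_psd hS _

private lemma commMat_mulVec {n r : ℕ} (x : Fin r × Fin n → ℝ) (p : Fin n × Fin r) :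
    (commMat n r *ᵥ x) p = x (p.2, p.1) := by
  simp [commMat, mulVec, dotProduct, Fintype.sum_prod_type, ite_and, mul_ite, ite_mul,
    Finset.sum_ite_eq, Finset.sum_ite_eq']

private lemma commMat_nsq {n r : ℕ} (x : Fin r × Fin n → ℝ) :
    (commMat n r *ᵥ x) ⬝ᵥ (commMat n r *ᵥ x) = x ⬝ᵥ x := by
  simp only [dotProduct, Fintype.sum_prod_type]
  rw [Finset.sum_comm]
  simp [commMat_mulVec]

end SigMaxLemmas

/-- for `M = Qᵀ(AᵀA + S² ⊗ Iₙ)Q` with `S` symmetric positive semidefinite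
and `Q = (U ⊗ Iₙ) + (Iₙ ⊗ U)Π_{nr}`,
`λ_max(M) ≤ (σ_max(A)² + λ_max(S)²) σ_max(Q)² ≤ 4(σ_max(A)² + λ_max(S)²) σ_max(U)²`. -/
theorem lambdaMax_M_le {m n r : ℕ}
    (A : Matrix (Fin m) (Fin n × Fin n) ℝ)
    (S : Matrix (Fin n) (Fin n) ℝ) (hS : S.PosSemidef)
    (U : Matrix (Fin n) (Fin r) ℝ)
    (Q : Matrix (Fin n × Fin n) (Fin r × Fin n) ℝ)
    (hQ : Q = U ⊗ₖ (1 : Matrix (Fin n) (Fin n) ℝ)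
        + ((1 : Matrix (Fin n) (Fin n) ℝ) ⊗ₖ U) * commMat n r)
    (M : Matrix (Fin r × Fin n) (Fin r × Fin n) ℝ)
    (hMdef : M = Qᵀ * (Aᵀ * A + (S * S) ⊗ₖ (1 : Matrix (Fin n) (Fin n) ℝ)) * Q)
    (hM : M.IsHermitian) :
    (⨆ i, hM.eigenvalues i) ≤
        (sigMax A ^ 2 + (⨆ i, hS.isHermitian.eigenvalues i) ^ 2) * sigMax Q ^ 2 ∧
    (sigMax A ^ 2 + (⨆ i, hS.isHermitian.eigenvalues i) ^ 2) * sigMax Q ^ 2 ≤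
        4 * (sigMax A ^ 2 + (⨆ i, hS.isHermitian.eigenvalues i) ^ 2) * sigMax U ^ 2 := by
  set lS : ℝ := ⨆ i, hS.isHermitian.eigenvalues i with hlS
  set c0 : ℝ := sigMax A ^ 2 + lS ^ 2 with hc0def
  have hc0 : 0 ≤ c0 := by positivity
  -- quadratic form bound for the middle matrix
  have hmid : ∀ y : Fin n × Fin n → ℝ,
      y ⬝ᵥ ((Aᵀ * A + (S * S) ⊗ₖ (1 : Matrix (Fin n) (Fin n) ℝ)) *ᵥ y) ≤ c0 * (y ⬝ᵥ y) := by
    intro y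
    rw [add_mulVec, dotProduct_add]
    have h1 : y ⬝ᵥ ((Aᵀ * A) *ᵥ y) ≤ sigMax A ^ 2 * (y ⬝ᵥ y) := by
      have : y ⬝ᵥ ((Aᵀ * A) *ᵥ y) = (A *ᵥ y) ⬝ᵥ (A *ᵥ y) := by
        rw [← conjTranspose_eq_transpose_of_trivial, dot_conjTranspose_mul]
      rw [this]
      exact normsq_mulVec_le A y
    have h2 : y ⬝ᵥ (((S * S) ⊗ₖ (1 : Matrix (Fin n) (Fin n) ℝ)) *ᵥ y) ≤ lS ^ 2 * (y ⬝ᵥ y) := by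
      have hfac : (S * S) ⊗ₖ (1 : Matrix (Fin n) (Fin n) ℝ)
          = (S ⊗ₖ (1 : Matrix (Fin n) (Fin n) ℝ)) * (S ⊗ₖ (1 : Matrix (Fin n) (Fin n) ℝ)) := by
        rw [← mul_kronecker_mul, Matrix.one_mul]
      have hKT : (S ⊗ₖ (1 : Matrix (Fin n) (Fin n) ℝ))ᵀ
          = S ⊗ₖ (1 : Matrix (Fin n) (Fin n) ℝ) := by
        have hSt : Sᵀ = S := by
          rw [← conjTranspose_eq_transpose_of_trivial, hS.isHermitian.eq]
        rw [← kroneckerMap_transpose, hSt, transpose_one]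
      have hquad : y ⬝ᵥ (((S * S) ⊗ₖ (1 : Matrix (Fin n) (Fin n) ℝ)) *ᵥ y)
          = ((S ⊗ₖ (1 : Matrix (Fin n) (Fin n) ℝ)) *ᵥ y) ⬝ᵥ
            ((S ⊗ₖ (1 : Matrix (Fin n) (Fin n) ℝ)) *ᵥ y) := by
        have hswap : y ᵥ* (S ⊗ₖ (1 : Matrix (Fin n) (Fin n) ℝ))
            = (S ⊗ₖ (1 : Matrix (Fin n) (Fin n) ℝ)) *ᵥ y := by
          rw [← mulVec_transpose, hKT]
        rw [hfac, ← mulVec_mulVec, dotProduct_mulVec, hswap]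
      rw [hquad]
      exact nsq_kron_one_psd_le hS y
    calc y ⬝ᵥ ((Aᵀ * A) *ᵥ y) + y ⬝ᵥ (((S * S) ⊗ₖ (1 : Matrix (Fin n) (Fin n) ℝ)) *ᵥ y)
        ≤ sigMax A ^ 2 * (y ⬝ᵥ y) + lS ^ 2 * (y ⬝ᵥ y) := add_le_add h1 h2
      _ = c0 * (y ⬝ᵥ y) := by rw [hc0def]; ring
  constructor
  · -- first inequality
    cases isEmpty_or_nonempty (Fin r × Fin n) with
    | inl hE =>
      rw [Real.iSup_of_isEmpty]
      exact mul_nonneg hc0 (sq_nonneg _)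
    | inr hN =>
      obtain ⟨i₀, hi₀⟩ := exists_eq_ciSup_of_finite (f := hM.eigenvalues)
      rw [← hi₀]
      have hv : (⇑(hM.eigenvectorBasis i₀) : Fin r × Fin n → ℝ) ⬝ᵥ
          (M *ᵥ ⇑(hM.eigenvectorBasis i₀)) = hM.eigenvalues i₀ := by
        rw [onb_dot_mulVec hM _ i₀, onb_dot_self hM i₀, mul_one]
      rw [← hv]
      set v : Fin r × Fin n → ℝ := ⇑(hM.eigenvectorBasis i₀) with hvdef
      have hv1 : v ⬝ᵥ v = 1 := onb_dot_self hM i₀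
      have hsplit : v ⬝ᵥ (M *ᵥ v) = (Q *ᵥ v) ⬝ᵥ
          ((Aᵀ * A + (S * S) ⊗ₖ (1 : Matrix (Fin n) (Fin n) ℝ)) *ᵥ (Q *ᵥ v)) := by
        rw [hMdef, ← mulVec_mulVec, ← mulVec_mulVec, dotProduct_mulVec, vecMul_transpose]
      rw [hsplit]
      calc (Q *ᵥ v) ⬝ᵥ ((Aᵀ * A + (S * S) ⊗ₖ (1 : Matrix (Fin n) (Fin n) ℝ)) *ᵥ (Q *ᵥ v))
          ≤ c0 * ((Q *ᵥ v) ⬝ᵥ (Q *ᵥ v)) := hmid _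
        _ ≤ c0 * (sigMax Q ^ 2 * (v ⬝ᵥ v)) := by
            exact mul_le_mul_of_nonneg_left (normsq_mulVec_le Q v) hc0
        _ = c0 * sigMax Q ^ 2 := by rw [hv1, mul_one]
  · -- second inequality
    have hQU : sigMax Q ≤ 2 * sigMax U := by
      refine sigMax_le_of (by have := sigMax_nonneg U; linarith) Q fun x => ?_
      have hx0 : 0 ≤ x ⬝ᵥ x := dot_self_nonneg x
      set a : Fin n × Fin n → ℝ := (U ⊗ₖ (1 : Matrix (Fin n) (Fin n) ℝ)) *ᵥ x with hadef
      set b : Fin n × Fin n → ℝ :=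
        ((1 : Matrix (Fin n) (Fin n) ℝ) ⊗ₖ U) *ᵥ (commMat n r *ᵥ x) with hbdef
      have hQx : Q *ᵥ x = a + b := by
        rw [hQ, add_mulVec, hadef, hbdef, ← mulVec_mulVec]
      have ha : a ⬝ᵥ a ≤ sigMax U ^ 2 * (x ⬝ᵥ x) := nsq_kron_one_le U x
      have hb : b ⬝ᵥ b ≤ sigMax U ^ 2 * (x ⬝ᵥ x) := by
        calc b ⬝ᵥ b ≤ sigMax U ^ 2 * ((commMat n r *ᵥ x) ⬝ᵥ (commMat n r *ᵥ x)) :=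
              nsq_one_kron_le U _
          _ = sigMax U ^ 2 * (x ⬝ᵥ x) := by rw [commMat_nsq]
      have hsa : Real.sqrt (a ⬝ᵥ a) ≤ sigMax U * Real.sqrt (x ⬝ᵥ x) := by
        calc Real.sqrt (a ⬝ᵥ a) ≤ Real.sqrt (sigMax U ^ 2 * (x ⬝ᵥ x)) := Real.sqrt_le_sqrt ha
          _ = sigMax U * Real.sqrt (x ⬝ᵥ x) := by
              rw [Real.sqrt_mul (sq_nonneg _), Real.sqrt_sq (sigMax_nonneg U)]
      have hsb : Real.sqrt (b ⬝ᵥ b) ≤ sigMax U * Real.sqrt (x ⬝ᵥ x) := by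
        calc Real.sqrt (b ⬝ᵥ b) ≤ Real.sqrt (sigMax U ^ 2 * (x ⬝ᵥ x)) := Real.sqrt_le_sqrt hb
          _ = sigMax U * Real.sqrt (x ⬝ᵥ x) := by
              rw [Real.sqrt_mul (sq_nonneg _), Real.sqrt_sq (sigMax_nonneg U)]
      calc (Q *ᵥ x) ⬝ᵥ (Q *ᵥ x) = (a + b) ⬝ᵥ (a + b) := by rw [hQx]
        _ ≤ (Real.sqrt (a ⬝ᵥ a) + Real.sqrt (b ⬝ᵥ b))^2 := nsq_add_le a b
        _ ≤ (sigMax U * Real.sqrt (x ⬝ᵥ x) + sigMax U * Real.sqrt (x ⬝ᵥ x))^2 := by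
            refine pow_le_pow_left₀ (by positivity) (add_le_add hsa hsb) 2
        _ = (2 * sigMax U)^2 * Real.sqrt (x ⬝ᵥ x)^2 := by ring
        _ = (2 * sigMax U)^2 * (x ⬝ᵥ x) := by rw [Real.sq_sqrt hx0]
    have hsq : sigMax Q ^ 2 ≤ (2 * sigMax U) ^ 2 :=
      pow_le_pow_left₀ (sigMax_nonneg Q) hQU 2
    calc c0 * sigMax Q ^ 2 ≤ c0 * (2 * sigMax U) ^ 2 := mul_le_mul_of_nonneg_left hsq hc0
      _ = 4 * c0 * sigMax U ^ 2 := by ring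
end

section
/- Let X = [[W₁, X̄],[X̄^T, W₂]] ⪰ 0 with X̄ ∈ ℝ^{n̂×n̂} and W₁, W₂ symmetric. Then (1/2)(trace(W₁) + trace(W₂)) ≥ ‖X̄‖_*, the nuclear norm of X̄. -/
open Matrix

/-- The nuclear norm (sum of singular values) of a real square matrix. -/
noncomputable def nucNorm {n : ℕ} (M : Matrix (Fin n) (Fin n) ℝ) : ℝ :=
  ∑ i, Real.sqrt ((Matrix.isHermitian_conjTranspose_mul_self M).eigenvalues i)

private lemma psd_trace_nonneg {n : ℕ} {A : Matrix (Fin n) (Fin n) ℝ}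
    (hA : A.PosSemidef) : 0 ≤ A.trace := by
  rw [Matrix.trace]
  refine Finset.sum_nonneg fun i _ => ?_
  exact hA.diag_nonneg

/-- Fazel–Hindi–Boyd: if `[[W₁, X̄],[X̄ᵀ, W₂]] ⪰ 0` then
`(1/2)(trace W₁ + trace W₂) ≥ ‖X̄‖_*`. -/
theorem trace_ge_nucNorm_of_psd_block {N : ℕ}
    (W₁ W₂ Xb : Matrix (Fin N) (Fin N) ℝ)
    (hW₁ : W₁.IsHermitian) (hW₂ : W₂.IsHermitian)
    (hpsd : (Matrix.fromBlocks W₁ Xb Xbᵀ W₂).PosSemidef) :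
    nucNorm Xb ≤ (1/2 : ℝ) * (W₁.trace + W₂.trace) := by
  classical
  have hA : (Xbᵀ * Xb).IsHermitian := Matrix.isHermitian_conjTranspose_mul_self Xb
  set d : Fin N → ℝ := hA.eigenvalues with hddef
  have hApsd : (Xbᵀ * Xb).PosSemidef := by
    simpa using Matrix.posSemidef_conjTranspose_mul_self Xb
  have hd : ∀ i, 0 ≤ d i := fun i => hApsd.eigenvalues_nonneg i
  set Q : Matrix (Fin N) (Fin N) ℝ := (hA.eigenvectorUnitary : Matrix (Fin N) (Fin N) ℝ) with hQdef
  have hQ1 : Qᵀ * Q = 1 := by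
    have h := Matrix.mem_unitaryGroup_iff'.mp hA.eigenvectorUnitary.2
    rwa [Matrix.star_eq_conjTranspose, Matrix.conjTranspose_eq_transpose_of_trivial] at h
  have hQ2 : Q * Qᵀ = 1 := by
    have h := Matrix.mem_unitaryGroup_iff.mp hA.eigenvectorUnitary.2
    rwa [Matrix.star_eq_conjTranspose, Matrix.conjTranspose_eq_transpose_of_trivial] at h
  have hspec : Xbᵀ * Xb = Q * Matrix.diagonal d * Qᵀ := by
    have := hA.spectral_theorem
    simp [RCLike.ofReal_real_eq_id] at this
    rwa [Matrix.star_eq_conjTranspose, Matrix.conjTranspose_eq_transpose_of_trivial] at this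
  have hQAQ : Qᵀ * (Xbᵀ * Xb) * Q = Matrix.diagonal d := by
    rw [hspec]
    simp only [← Matrix.mul_assoc]
    rw [hQ1, Matrix.one_mul, Matrix.mul_assoc, hQ1, Matrix.mul_one]
  set D' : Matrix (Fin N) (Fin N) ℝ :=
    Matrix.diagonal (fun i => if d i = 0 then 0 else (Real.sqrt (d i))⁻¹) with hD'def
  set U : Matrix (Fin N) (Fin N) ℝ := Xb * Q * D' with hUdef
  have hD't : D'ᵀ = D' := Matrix.diagonal_transpose _
  have hUt : Uᵀ = D' * (Qᵀ * Xbᵀ) := by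
    rw [hUdef, Matrix.transpose_mul, Matrix.transpose_mul, hD't]
  have hsq : ∀ i, Real.sqrt (d i) * Real.sqrt (d i) = d i :=
    fun i => Real.mul_self_sqrt (hd i)
  have hUXQ : Uᵀ * (Xb * Q) = Matrix.diagonal (fun i => Real.sqrt (d i)) := by
    rw [hUt]
    have : D' * (Qᵀ * Xbᵀ) * (Xb * Q) = D' * (Qᵀ * (Xbᵀ * Xb) * Q) := by
      simp only [Matrix.mul_assoc]
    rw [this, hQAQ, hD'def, Matrix.diagonal_mul_diagonal]
    refine congrArg Matrix.diagonal (funext fun i => ?_)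
    by_cases h : d i = 0
    · simp [h]
    · have hs : Real.sqrt (d i) ≠ 0 := by
        intro h0
        exact h (by rw [← hsq i, h0, mul_zero])
      simp only [h, if_false]
      rw [inv_mul_eq_div, div_eq_iff hs]
      exact (hsq i).symm
  set E : Matrix (Fin N) (Fin N) ℝ :=
    Matrix.diagonal (fun i => if d i = 0 then (0:ℝ) else 1) with hEdef
  have hUU : Uᵀ * U = E := by
    rw [hUdef, ← Matrix.mul_assoc, hUXQ, hEdef, hD'def, Matrix.diagonal_mul_diagonal]
    refine congrArg Matrix.diagonal (funext fun i => ?_)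
    by_cases h : d i = 0
    · simp [h]
    · have hs : Real.sqrt (d i) ≠ 0 := by
        intro h0
        exact h (by rw [← hsq i, h0, mul_zero])
      simp [h, mul_inv_cancel₀ hs]
  have hD'E : D' * E = D' := by
    rw [hD'def, hEdef, Matrix.diagonal_mul_diagonal]
    refine congrArg Matrix.diagonal (funext fun i => ?_)
    by_cases h : d i = 0 <;> simp [h]
  have hUE : U * E = U := by
    rw [hUdef, Matrix.mul_assoc, hD'E]
  set P : Matrix (Fin N) (Fin N) ℝ := U * Uᵀ with hPdef
  have hPt : Pᵀ = P := by
    rw [hPdef, Matrix.transpose_mul, Matrix.transpose_transpose]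
  have hPP : P * P = P := by
    rw [hPdef]
    calc U * Uᵀ * (U * Uᵀ) = U * (Uᵀ * U) * Uᵀ := by simp only [Matrix.mul_assoc]
    _ = U * E * Uᵀ := by rw [hUU]
    _ = U * Uᵀ := by rw [hUE]
  have hIP : (1 - P) * (1 - P) = 1 - P := by
    rw [Matrix.mul_sub, Matrix.mul_one, Matrix.sub_mul, Matrix.one_mul, hPP, sub_self,
      sub_zero]
  have h1P : (1 - P).PosSemidef := by
    have h2 : (1 - P)ᴴ * (1 - P) = 1 - P := by
      rw [Matrix.conjTranspose_eq_transpose_of_trivial, Matrix.transpose_sub,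
        Matrix.transpose_one, hPt, hIP]
    have := Matrix.posSemidef_conjTranspose_mul_self (1 - P)
    rwa [h2] at this
  have hW₁psd : W₁.PosSemidef := by
    convert hpsd.submatrix (Sum.inl : Fin N → Fin N ⊕ Fin N) using 1
    ext i j
    simp
  -- trace (Uᵀ W₁ U) ≤ trace W₁
  have hT1 : (Uᵀ * (W₁ * U)).trace ≤ W₁.trace := by
    have e1 : (Uᵀ * (W₁ * U)).trace = (W₁ * P).trace := by
      rw [Matrix.trace_mul_comm (Uᵀ) (W₁ * U), Matrix.mul_assoc, hPdef]
    have e2 : ((1 - P) * W₁ * (1 - P)).trace = W₁.trace - (W₁ * P).trace := by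
      rw [Matrix.trace_mul_cycle, hIP, Matrix.sub_mul, Matrix.one_mul, Matrix.trace_sub,
        Matrix.trace_mul_comm]
    have e3 : 0 ≤ ((1 - P) * W₁ * (1 - P)).trace := by
      have h4 : ((1 - P)ᴴ * W₁ * (1 - P)).PosSemidef :=
        hW₁psd.conjTranspose_mul_mul_same (1 - P)
      rw [Matrix.conjTranspose_eq_transpose_of_trivial, Matrix.transpose_sub,
        Matrix.transpose_one, hPt] at h4
      exact psd_trace_nonneg h4
    rw [e1]
    linarith [e2 ▸ e3]
  -- trace (Qᵀ W₂ Q) = trace W₂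
  -- trace (Qᵀ W₂ Q) = trace W₂
  have hT2 : (Qᵀ * (W₂ * Q)).trace = W₂.trace := by
    rw [Matrix.trace_mul_comm, Matrix.mul_assoc, hQ2, Matrix.mul_one]
  set X : Matrix (Fin N ⊕ Fin N) (Fin N ⊕ Fin N) ℝ := Matrix.fromBlocks W₁ Xb Xbᵀ W₂ with hXdef
  set Z : Matrix (Fin N ⊕ Fin N) (Fin N) ℝ := Matrix.fromRows U (-Q) with hZdef
  have hS : (Zᴴ * X * Z).PosSemidef := hpsd.conjTranspose_mul_mul_same Z
  have hZH : Zᴴ = Matrix.fromCols Uᵀ (-Q)ᵀ := by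
    rw [hZdef, Matrix.conjTranspose_fromRows_eq_fromCols_conjTranspose]
    simp
  have hScalc : Zᴴ * X * Z =
      Uᵀ * (W₁ * U) - Uᵀ * (Xb * Q) - Qᵀ * (Xbᵀ * U) + Qᵀ * (W₂ * Q) := by
    rw [Matrix.mul_assoc, hXdef, hZdef, Matrix.fromBlocks_mul_fromRows, hZH,
      Matrix.fromCols_mul_fromRows]
    simp only [Matrix.mul_neg, Matrix.neg_mul, Matrix.mul_add, Matrix.transpose_neg,
      Matrix.mul_assoc]
    abel
  have htr0 : 0 ≤ (Zᴴ * X * Z).trace := psd_trace_nonneg hS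
  rw [hScalc, Matrix.trace_add, Matrix.trace_sub, Matrix.trace_sub] at htr0
  have hs1 : (Uᵀ * (Xb * Q)).trace = ∑ i, Real.sqrt (d i) := by
    rw [hUXQ, Matrix.trace_diagonal]
  have hs2 : (Qᵀ * (Xbᵀ * U)).trace = ∑ i, Real.sqrt (d i) := by
    rw [← Matrix.trace_transpose, Matrix.transpose_mul, Matrix.transpose_mul,
      Matrix.transpose_transpose, Matrix.transpose_transpose, Matrix.mul_assoc, ← hs1]
  have hnuc : nucNorm Xb = ∑ i, Real.sqrt (d i) := rfl
  rw [hs1, hs2] at htr0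
  rw [hnuc]
  linarith
end
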